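/- arXiv:1906.03567 — 2 statements merged into one kernel-verified Lean document; each statement's English description precedes it below -/
import Mathlib

section
/- Suppose a family of n tasks has relative demands Dᵢ' (uplink), Oᵢ' (downlink), Cᵢ' (compute), all positive, and a fog node has resource capacities Rᵘ, Rᵈ, Rᶠ > 0. Define β_u = (∑ᵢ Dᵢ')/Rᵘ, β_d = (∑ᵢ Oᵢ')/Rᵈ, β_f = (∑ᵢ Cᵢ')/Rᶠ. If β_u + β_d + β_f ≤ 1, then there exists a resource allocation (rᵢᵘ, rᵢᵈ, rᵢᶠ) with rᵢᵘ, rᵢᵈ, rᵢᶠ > 0, ∑ᵢ rᵢᵘ ≤ Rᵘ, ∑ᵢ rᵢᵈ ≤ Rᵈ, ∑ᵢ rᵢᶠ ≤ Rᶠ, and Dᵢ'/rᵢᵘ + Oᵢ'/rᵢᵈ + Cᵢ'/rᵢᶠ ≤ 1 for every task i. -/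
/-!
Give every task a share of each resource proportional to its demand. Then each ratio of demand
to share is the same for all tasks, namely the aggregate load `β` of that resource, so every
task's total load is `β_u + β_d + β_f ≤ 1`.
-/

open Finset

section ProportionalShare

variable {ι : Type*} [Fintype ι]

noncomputable def proportionalShare (d : ι → ℝ) (R : ℝ) (i : ι) : ℝ :=
  d i * R / ∑ j, d j

theorem proportionalShare_pos {d : ι → ℝ} {R : ℝ} (hd : ∀ j, 0 ≤ d j) {i : ι} (hi : 0 < d i)
    (hR : 0 < R) : 0 < proportionalShare d R i :=
  div_pos (mul_pos hi hR) (sum_pos' (fun j _ => hd j) ⟨i, mem_univ i, hi⟩)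

theorem sum_proportionalShare_le {d : ι → ℝ} {R : ℝ} (hd : ∀ j, 0 ≤ d j) (hR : 0 ≤ R) :
    ∑ i, proportionalShare d R i ≤ R := by
  simp only [proportionalShare, ← sum_div, ← sum_mul]
  rcases (sum_nonneg fun j _ => hd j).eq_or_lt with hS | hS
  · rw [← hS, zero_mul, zero_div]
    exact hR
  · rw [mul_div_cancel_left₀ R hS.ne']

theorem div_proportionalShare {d : ι → ℝ} (R : ℝ) {i : ι} (hi : d i ≠ 0) :
    d i / proportionalShare d R i = (∑ j, d j) / R := by
  rw [proportionalShare, div_div_eq_mul_div, mul_div_mul_left _ _ hi]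

end ProportionalShare

theorem proportional_allocation_feasible_general (n : ℕ)
    (D O C : Fin n → ℝ) (Ru Rd Rf : ℝ)
    (hD : ∀ i, 0 < D i) (hO : ∀ i, 0 < O i) (hC : ∀ i, 0 < C i)
    (hRu : 0 < Ru) (hRd : 0 < Rd) (hRf : 0 < Rf)
    (hsum : (∑ i, D i) / Ru + (∑ i, O i) / Rd + (∑ i, C i) / Rf ≤ 1) :
    ∃ ru rd rf : Fin n → ℝ,
      (∀ i, 0 < ru i) ∧ (∀ i, 0 < rd i) ∧ (∀ i, 0 < rf i) ∧
      (∑ i, ru i) ≤ Ru ∧ (∑ i, rd i) ≤ Rd ∧ (∑ i, rf i) ≤ Rf ∧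
      ∀ i, D i / ru i + O i / rd i + C i / rf i ≤ 1 := by
  have hD' : ∀ i, 0 ≤ D i := fun i => (hD i).le
  have hO' : ∀ i, 0 ≤ O i := fun i => (hO i).le
  have hC' : ∀ i, 0 ≤ C i := fun i => (hC i).le
  refine ⟨proportionalShare D Ru, proportionalShare O Rd, proportionalShare C Rf,
    fun i => proportionalShare_pos hD' (hD i) hRu, fun i => proportionalShare_pos hO' (hO i) hRd,
    fun i => proportionalShare_pos hC' (hC i) hRf, sum_proportionalShare_le hD' hRu.le,
    sum_proportionalShare_le hO' hRd.le, sum_proportionalShare_le hC' hRf.le, fun i => ?_⟩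
  rwa [div_proportionalShare Ru (hD i).ne', div_proportionalShare Rd (hO i).ne',
    div_proportionalShare Rf (hC i).ne']

theorem proportional_allocation_feasible (n : ℕ) (hn : 1 ≤ n)
    (D O C : Fin n → ℝ) (Ru Rd Rf : ℝ)
    (hD : ∀ i, 0 < D i) (hO : ∀ i, 0 < O i) (hC : ∀ i, 0 < C i)
    (hRu : 0 < Ru) (hRd : 0 < Rd) (hRf : 0 < Rf)
    (hsum : (∑ i, D i) / Ru + (∑ i, O i) / Rd + (∑ i, C i) / Rf ≤ 1) :
    ∃ ru rd rf : Fin n → ℝ,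
      (∀ i, 0 < ru i) ∧ (∀ i, 0 < rd i) ∧ (∀ i, 0 < rf i) ∧
      (∑ i, ru i) ≤ Ru ∧ (∑ i, rd i) ≤ Rd ∧ (∑ i, rf i) ≤ Rf ∧
      ∀ i, D i / ru i + O i / rd i + C i / rf i ≤ 1 :=
  proportional_allocation_feasible_general n D O C Ru Rd Rf hD hO hC hRu hRd hRf hsum
end

section
/- Suppose every cut added to the master problem is valid (satisfied by every x extendable to a feasible solution of the original problem), and the master problem at each iteration minimizes the same objective eᵀx as the original problem over x ∈ X₀ subject to the current cuts. If at some iteration the master problem's optimal solution x* admits a feasible resource allocation r* for the subproblem constraints, then (x*, r*) is a global optimal solution of the original joint problem. -/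
theorem master_feasible_solution_is_optimal_general
    {α ρ : Type*} (X₀ : Set α) (R : α → ρ → Prop) (e : α → ℝ)
    (cuts : Set (α → Prop))
    (hvalid : ∀ P ∈ cuts, ∀ x, x ∈ X₀ → (∃ r, R x r) → P x)
    (xstar : α) (hx : xstar ∈ X₀)
    (hopt : ∀ x, x ∈ X₀ → (∀ P ∈ cuts, P x) → e xstar ≤ e x)
    (rstar : ρ) (hr : R xstar rstar) :
    (xstar ∈ X₀ ∧ R xstar rstar) ∧
    ∀ x r, x ∈ X₀ → R x r → e xstar ≤ e x :=
  ⟨⟨hx, hr⟩, fun x r hxX hxr => hopt x hxX fun P hP => hvalid P hP x hxX ⟨r, hxr⟩⟩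

theorem master_feasible_solution_is_optimal
    {α ρ : Type*} (X₀ : Set α) (R : α → ρ → Prop) (e : α → ℝ)
    (cuts : Set (α → Prop))
    (hvalid : ∀ P ∈ cuts, ∀ x, x ∈ X₀ → (∃ r, R x r) → P x)
    (xstar : α) (hx : xstar ∈ X₀) (hcuts : ∀ P ∈ cuts, P xstar)
    (hopt : ∀ x, x ∈ X₀ → (∀ P ∈ cuts, P x) → e xstar ≤ e x)
    (rstar : ρ) (hr : R xstar rstar) :
    (xstar ∈ X₀ ∧ R xstar rstar) ∧
    ∀ x r, x ∈ X₀ → R x r → e xstar ≤ e x :=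
  master_feasible_solution_is_optimal_general X₀ R e cuts hvalid xstar hx hopt rstar hr
end
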